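/- Single-step Hoeffding bound under a conditional expectation (established in Steps of the proof of the noncommutative Azuma inequality). Let E be a conditional expectation on M_d(ℂ), let y ∈ M_d(ℂ) be Hermitian with E(y) = 0 and −c·I ≤ y ≤ c·I for some c > 0, and let t > 0. Then E(exp(t·y)) ≤ ((e^{tc} + e^{−tc})/2)·I ≤ exp(t²c²/2)·I. -/

import Mathlib

/-!
On `[-c, c]` the convex function `x ↦ exp (t * x)` lies below its chord
`cosh (t * c) + (sinh (t * c) / c) * x`. The continuous functional calculus lifts this to
`exp (t • y) ≤ cosh (t * c) • 1 + (sinh (t * c) / c) • y`, and applying the positive map `E`,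
which fixes scalars and kills `y`, leaves `cosh (t * c) • 1`. The second bound is
`cosh x ≤ exp (x ^ 2 / 2)`.
-/

namespace NCAzuma

open Matrix
open scoped ComplexOrder

/-- `Prob(x ≥ t)`: the normalized count `(1/d)·#{i : λ_i(x) ≥ t}` of eigenvalues of a
Hermitian matrix `x` that are `≥ t`. -/
noncomputable def probGE (d : ℕ) (x : Matrix (Fin d) (Fin d) ℂ) (t : ℝ) : ℝ :=
  if hx : x.IsHermitian then
    ((Finset.univ.filter fun i => t ≤ hx.eigenvalues i).card : ℝ) / d
  else 0

/-- `Prob(|x| ≥ t)`: the normalized count `(1/d)·#{i : |λ_i(x)| ≥ t}`. -/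
noncomputable def probAbsGE (d : ℕ) (x : Matrix (Fin d) (Fin d) ℂ) (t : ℝ) : ℝ :=
  if hx : x.IsHermitian then
    ((Finset.univ.filter fun i => t ≤ |hx.eigenvalues i|).card : ℝ) / d
  else 0

/-- The Loewner order on matrices: `Loewner x y` means `x ≤ y`, i.e. `y - x` is
positive semidefinite. -/
def Loewner {d : ℕ} (x y : Matrix (Fin d) (Fin d) ℂ) : Prop := (y - x).PosSemidef

/-- A conditional expectation on `M_d(ℂ)`: a ℂ-linear, positive, unital, trace-preserving
map satisfying the bimodule property over its range. -/
structure CondExp (d : ℕ) where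
  toFun : Matrix (Fin d) (Fin d) ℂ → Matrix (Fin d) (Fin d) ℂ
  map_add : ∀ x y, toFun (x + y) = toFun x + toFun y
  map_smul : ∀ (c : ℂ) (x), toFun (c • x) = c • toFun x
  pos : ∀ x, x.PosSemidef → (toFun x).PosSemidef
  unital : toFun 1 = 1
  trace_pres : ∀ x, (toFun x).trace = x.trace
  bimodule : ∀ a x b, toFun a = a → toFun b = b → toFun (a * x * b) = a * toFun x * b

/-- A filtration `E_0, …, E_n`: `E_i ∘ E_j = E_j ∘ E_i = E_{min(i,j)}`. -/
def IsFiltration {d : ℕ} (n : ℕ) (E : ℕ → CondExp d) : Prop :=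
  ∀ i ≤ n, ∀ j ≤ n, ∀ x, (E i).toFun ((E j).toFun x) = (E (min i j)).toFun x

/-- A Hermitian martingale `(x_j)_{0≤j≤n}` with respect to the filtration `(E_j)`:
each `x_j` is Hermitian with `E_j(x_j) = x_j`, and `E_j(x_{j+1}) = x_j`. -/
def IsHermMartingale {d : ℕ} (n : ℕ) (E : ℕ → CondExp d)
    (x : ℕ → Matrix (Fin d) (Fin d) ℂ) : Prop :=
  (∀ j ≤ n, (x j).IsHermitian) ∧ (∀ j ≤ n, (E j).toFun (x j) = x j) ∧
  (∀ j < n, (E j).toFun (x (j + 1)) = x j)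

/-- A Hermitian supermartingale `(x_j)_{0≤j≤n}`: `E_j(x_{j+1}) ≤ x_j` in the Loewner order. -/
def IsHermSupermartingale {d : ℕ} (n : ℕ) (E : ℕ → CondExp d)
    (x : ℕ → Matrix (Fin d) (Fin d) ℂ) : Prop :=
  (∀ j ≤ n, (x j).IsHermitian) ∧ (∀ j ≤ n, (E j).toFun (x j) = x j) ∧
  (∀ j < n, Loewner ((E j).toFun (x (j + 1))) (x j))

/-- The matrix exponential. -/
noncomputable def mexp {d : ℕ} (x : Matrix (Fin d) (Fin d) ℂ) : Matrix (Fin d) (Fin d) ℂ :=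
  NormedSpace.exp x

/-- The operator norm of a Hermitian matrix: `max_i |λ_i(x)|`. -/
noncomputable def opNorm (d : ℕ) (x : Matrix (Fin d) (Fin d) ℂ) : ℝ :=
  if hx : x.IsHermitian then
    if hd : (Finset.univ : Finset (Fin d)).Nonempty then
      Finset.univ.sup' hd fun i => |hx.eigenvalues i|
    else 0
  else 0

/-- The `L_p`-norm with respect to the normalized trace:
`‖x‖_p = ((1/d)·∑_i |λ_i(x)|^p)^(1/p)` for Hermitian `x`. -/
noncomputable def pNorm (d : ℕ) (p : ℝ) (x : Matrix (Fin d) (Fin d) ℂ) : ℝ :=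
  if hx : x.IsHermitian then
    ((∑ i, |hx.eigenvalues i| ^ p) / d) ^ (1 / p)
  else 0

open scoped MatrixOrder Matrix.Norms.L2Operator

lemma _root_.Real.exp_mul_le_cosh_add_sinh_div_mul {c t l : ℝ} (hc : 0 < c)
    (hl : l ∈ Set.Icc (-c) c) :
    Real.exp (t * l) ≤ Real.cosh (t * c) + Real.sinh (t * c) / c * l := by
  obtain ⟨hlc, hcl⟩ := hl
  have hwl : 0 ≤ (c - l) / (2 * c) := div_nonneg (by linarith) (by linarith)
  have hwr : 0 ≤ (c + l) / (2 * c) := div_nonneg (by linarith) (by linarith)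
  have hw : (c - l) / (2 * c) + (c + l) / (2 * c) = 1 := by field_simp; ring
  calc Real.exp (t * l)
      = Real.exp ((c - l) / (2 * c) * -(t * c) + (c + l) / (2 * c) * (t * c)) := by
        congr 1; field_simp; ring
    _ ≤ (c - l) / (2 * c) * Real.exp (-(t * c)) + (c + l) / (2 * c) * Real.exp (t * c) :=
        convexOn_exp.2 (Set.mem_univ _) (Set.mem_univ _) hwl hwr hw
    _ = Real.cosh (t * c) + Real.sinh (t * c) / c * l := by
        rw [Real.cosh_eq, Real.sinh_eq]; field_simp; ring

section CStarAlgebra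

variable {A : Type*} [NormedRing A] [StarRing A] [NormedAlgebra ℝ A] [PartialOrder A]
  [StarOrderedRing A] [StarModule ℝ A] [ContinuousFunctionalCalculus ℝ A IsSelfAdjoint]
  [NonnegSpectrumClass ℝ A]

lemma _root_.IsSelfAdjoint.exp_smul_le_cosh_add_sinh {a : A} (ha : IsSelfAdjoint a) {c : ℝ}
    (hc : 0 < c) (hlow : algebraMap ℝ A (-c) ≤ a) (hupp : a ≤ algebraMap ℝ A c) (t : ℝ) :
    NormedSpace.exp (t • a) ≤
      algebraMap ℝ A (Real.cosh (t * c)) + (Real.sinh (t * c) / c) • a := by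
  have hspec : ∀ x ∈ spectrum ℝ a, x ∈ Set.Icc (-c) c := fun x hx =>
    ⟨(algebraMap_le_iff_le_spectrum ha).1 hlow x hx, (le_algebraMap_iff_spectrum_le ha).1 hupp x hx⟩
  rw [← CFC.real_exp_eq_normedSpace_exp ((IsSelfAdjoint.all t).smul ha),
    ← cfc_comp_smul t Real.exp a, ← cfc_const_mul_id _ a, ← cfc_const_add _ _ a]
  exact cfc_mono fun x hx => Real.exp_mul_le_cosh_add_sinh_div_mul hc (hspec x hx)

end CStarAlgebra

namespace CondExp

variable {d : ℕ} (E : CondExp d)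

def toLinearMap : Matrix (Fin d) (Fin d) ℂ →ₗ[ℂ] Matrix (Fin d) (Fin d) ℂ where
  toFun := E.toFun
  map_add' := E.map_add
  map_smul' := E.map_smul

@[simp]
lemma toLinearMap_apply (x : Matrix (Fin d) (Fin d) ℂ) : E.toLinearMap x = E.toFun x := rfl

lemma monotone : Monotone E.toFun := fun x y hxy => by
  rw [Matrix.le_iff, ← toLinearMap_apply, ← toLinearMap_apply, ← map_sub]
  exact E.pos _ hxy

lemma map_algebraMap (r : ℝ) :
    E.toFun (algebraMap ℝ (Matrix (Fin d) (Fin d) ℂ) r) = algebraMap ℝ _ r := by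
  rw [Algebra.algebraMap_eq_smul_one, ← toLinearMap_apply, LinearMap.map_smul_of_tower,
    toLinearMap_apply, E.unital]

end CondExp

lemma loewner_iff_le {d : ℕ} {x y : Matrix (Fin d) (Fin d) ℂ} : Loewner x y ↔ x ≤ y := Iff.rfl

lemma ofReal_smul_one_eq_algebraMap {n : Type*} [Fintype n] [DecidableEq n] (r : ℝ) :
    ((r : ℂ) • (1 : Matrix n n ℂ)) = algebraMap ℝ _ r := by
  rw [Complex.coe_smul, Algebra.algebraMap_eq_smul_one]

theorem condexp_exp_hoeffding_bound_general {d : ℕ} (E : CondExp d)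
    (y : Matrix (Fin d) (Fin d) ℂ) (hy : y.IsHermitian) (hEy : E.toFun y = 0)
    (c t : ℝ) (hc : 0 < c)
    (hlow : Loewner (-((c : ℂ) • (1 : Matrix (Fin d) (Fin d) ℂ))) y)
    (hupp : Loewner y ((c : ℂ) • (1 : Matrix (Fin d) (Fin d) ℂ))) :
    Loewner (E.toFun (mexp ((t : ℂ) • y)))
        ((((Real.exp (t * c) + Real.exp (-(t * c))) / 2 : ℝ) : ℂ) •
          (1 : Matrix (Fin d) (Fin d) ℂ)) ∧
    Loewner ((((Real.exp (t * c) + Real.exp (-(t * c))) / 2 : ℝ) : ℂ) •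
          (1 : Matrix (Fin d) (Fin d) ℂ))
        (((Real.exp (t ^ 2 * c ^ 2 / 2) : ℝ) : ℂ) • (1 : Matrix (Fin d) (Fin d) ℂ)) := by
  simp only [loewner_iff_le, ofReal_smul_one_eq_algebraMap, ← map_neg, ← Real.cosh_eq]
    at hlow hupp ⊢
  have hexp : mexp ((t : ℂ) • y) ≤
      algebraMap ℝ _ (Real.cosh (t * c)) + (Real.sinh (t * c) / c) • y := by
    rw [mexp, Complex.coe_smul]
    exact hy.isSelfAdjoint.exp_smul_le_cosh_add_sinh hc hlow hupp t
  have hEbound : E.toFun (algebraMap ℝ _ (Real.cosh (t * c)) + (Real.sinh (t * c) / c) • y) =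
      algebraMap ℝ _ (Real.cosh (t * c)) := by
    rw [← E.toLinearMap_apply, map_add, LinearMap.map_smul_of_tower, E.toLinearMap_apply,
      E.toLinearMap_apply, hEy, smul_zero, add_zero, E.map_algebraMap]
  refine ⟨hEbound ▸ E.monotone hexp, algebraMap_mono _ ?_⟩
  simpa only [mul_pow] using Real.cosh_le_exp_half_sq (t * c)

/-- **Single-step Hoeffding bound under a conditional expectation**: if `E(y) = 0` and
`−c·I ≤ y ≤ c·I`, then `E(exp(t·y)) ≤ ((e^{tc} + e^{−tc})/2)·I ≤ exp(t²c²/2)·I`. -/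
theorem condexp_exp_hoeffding_bound {d : ℕ} (hd : 1 ≤ d) (E : CondExp d)
    (y : Matrix (Fin d) (Fin d) ℂ) (hy : y.IsHermitian) (hEy : E.toFun y = 0)
    (c t : ℝ) (hc : 0 < c) (ht : 0 < t)
    (hlow : Loewner (-((c : ℂ) • (1 : Matrix (Fin d) (Fin d) ℂ))) y)
    (hupp : Loewner y ((c : ℂ) • (1 : Matrix (Fin d) (Fin d) ℂ))) :
    Loewner (E.toFun (mexp ((t : ℂ) • y)))
        ((((Real.exp (t * c) + Real.exp (-(t * c))) / 2 : ℝ) : ℂ) •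
          (1 : Matrix (Fin d) (Fin d) ℂ)) ∧
    Loewner ((((Real.exp (t * c) + Real.exp (-(t * c))) / 2 : ℝ) : ℂ) •
          (1 : Matrix (Fin d) (Fin d) ℂ))
        (((Real.exp (t ^ 2 * c ^ 2 / 2) : ℝ) : ℂ) • (1 : Matrix (Fin d) (Fin d) ℂ)) :=
  condexp_exp_hoeffding_bound_general E y hy hEy c t hc hlow hupp

end NCAzuma
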